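/- arXiv:1311.3320 — 2 statements merged into one kernel-verified Lean document; each statement's English description precedes it below -/
import Mathlib

section
/- Let r ≥ 1 and let D be an effective divisor on the Hirzebruch surface F_r linearly equivalent to L_r = (r+1)F + E. If P is a point of F_r with mult_P(D) ≥ r+2, then D = (r+1)F_P + E where F_P is the fiber through P, and P lies on the negative section E; in particular mult_P(D) ≤ r+2 and at most one point of F_r has multiplicity ≥ r+2 on D. -/
open MvPolynomial

/-- The Picard grading of the Cox ring `k[x₀,x₁,x₂,x₃]` of the Hirzebruch surface
`F_r`: classes `(c, b) = c·F + b·E`; the fiber coordinates `x₀, x₁` have class `F`,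
the coordinate `x₂` cutting out the negative section `E` has class `E`, and `x₃`
has class `E + r·F`. -/
def hirzebruchCoxWeight (r : ℕ) : Fin 4 → ℕ × ℕ :=
  ![(1, 0), (1, 0), (0, 1), (r, 1)]

/-- A point of `F_r` is given in Cox coordinates by `p : Fin 4 → k` with
`(p 0, p 1) ≠ (0,0)` and `(p 2, p 3) ≠ (0,0)`. -/
def IsCoxPoint {k : Type*} [Field k] (p : Fin 4 → k) : Prop :=
  (p 0 ≠ 0 ∨ p 1 ≠ 0) ∧ (p 2 ≠ 0 ∨ p 3 ≠ 0)

/-- A Cox-homogeneous polynomial `s` has multiplicity at least `m` at the point with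
Cox coordinates `p` if all iterated partial derivatives of `s` of order `< m` vanish
at `p` (the correct notion in characteristic `0`). -/
def coxMultAtLeast {k : Type*} [Field k] (s : MvPolynomial (Fin 4) k) (m : ℕ)
    (p : Fin 4 → k) : Prop :=
  ∀ l : List (Fin 4), l.length < m →
    eval p (l.foldl (fun q i => pderiv i q) s) = 0

open Finset

/-!
The grading leaves only one shape: `s = x₃·(α x₀ + β x₁) + x₂·f(x₀, x₁)` with `f` a binary form
of degree `r + 1`. The constants `∂₀∂₃ s = α` and `∂₁∂₃ s = β` are derivatives of order
`2 < r + 2`, so they vanish and `s = x₂ f`. Writing `f = ∑ (r+1 choose i) bᵢ x₀ⁱ x₁^(r+1-i)`, the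
derivative `∂₁^(r-i) ∂₀ⁱ ∂₂ s` is the linear form `(r+1)!·(bᵢ x₁ + bᵢ₊₁ x₀)`, whose vanishing at `P`
is a two-term recurrence forcing `bᵢ = c p₁ⁱ (-p₀)^(r+1-i)`, i.e. `f = c (p₁x₀ - p₀x₁)^(r+1)`.
Finally `∂₁^(r+1-i) ∂₀ⁱ s = (r+1)!·bᵢ·x₂`, so a nonzero `bᵢ` gives `p₂ = 0`, and one more `∂₂`
yields a nonzero constant, so the multiplicity is exactly `r + 2`. A second such point `Q` gives
the same divisor, so the fibres through `P` and `Q` agree, and both points lie on `E`.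
-/

theorem Nat.succ_descFactorial_self (n : ℕ) : (n + 1).descFactorial n = (n + 1).factorial := by
  simpa using Nat.factorial_mul_descFactorial n.le_succ

theorem exists_eq_mul_pow_mul_neg_pow_of_recurrence {K : Type*} [Field K] {x y : K}
    (hxy : x ≠ 0 ∨ y ≠ 0) {n : ℕ} {b : ℕ → K} (h : ∀ i < n, y * b i + x * b (i + 1) = 0) :
    ∃ c : K, ∀ m ≤ n, b m = c * y ^ m * (-x) ^ (n - m) := by
  by_cases hx : x = 0
  · have hy : y ≠ 0 := hxy.resolve_left (not_not.mpr hx)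
    refine ⟨b n / y ^ n, fun m hm => ?_⟩
    rcases hm.lt_or_eq with hm | rfl
    · have := h m hm
      rw [hx, zero_mul, add_zero, mul_eq_zero, or_iff_right hy] at this
      rw [this, hx, neg_zero, zero_pow (by omega), mul_zero]
    · field_simp; simp
  · have hx' : (-x) ^ n ≠ 0 := pow_ne_zero _ (neg_ne_zero.mpr hx)
    set c := b 0 / (-x) ^ n
    refine ⟨c, fun m hm => ?_⟩
    induction m with
    | zero => simp [c, hx']
    | succ m ih =>
      have hrec := h m (by omega)
      rw [ih (by omega), show n - m = n - (m + 1) + 1 by omega] at hrec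
      apply mul_left_cancel₀ hx
      linear_combination hrec

theorem exists_eq_mul_of_mul_eq_mul {K : Type*} [Field K] {x₀ x₁ y₀ y₁ : K}
    (hx : x₀ ≠ 0 ∨ x₁ ≠ 0) (hy : y₀ ≠ 0 ∨ y₁ ≠ 0) (h : y₁ * x₀ = y₀ * x₁) :
    ∃ a : K, a ≠ 0 ∧ y₀ = a * x₀ ∧ y₁ = a * x₁ := by
  by_cases hx₀ : x₀ = 0
  · have hx₁ : x₁ ≠ 0 := hx.resolve_left (not_not.mpr hx₀)
    have hy₀ : y₀ = 0 := by simpa [hx₀, hx₁] using h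
    have hy₁ : y₁ ≠ 0 := hy.resolve_left (not_not.mpr hy₀)
    exact ⟨y₁ / x₁, div_ne_zero hy₁ hx₁, by simp [hx₀, hy₀], by field_simp⟩
  · have hy₀ : y₀ ≠ 0 := fun hy₀ => hy.elim (· hy₀) fun hy₁ => hy₁ (by simpa [hy₀, hx₀] using h)
    exact ⟨y₀ / x₀, div_ne_zero hy₀ hx₀, by field_simp, by field_simp; linear_combination h⟩

section IteratedPDeriv

variable {R σ : Type*} [CommSemiring R]

theorem iterate_pderiv_sum {ι : Type*} (i : σ) (n : ℕ) (t : Finset ι)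
    (f : ι → MvPolynomial σ R) :
    (pderiv i)^[n] (∑ m ∈ t, f m) = ∑ m ∈ t, (pderiv i)^[n] (f m) := by
  have h := map_sum ((pderiv i).toLinearMap ^ n) f t
  simp only [Module.End.pow_apply] at h
  exact h

theorem iterate_pderiv_monomial [DecidableEq σ] (i : σ) (n : ℕ) (d : σ →₀ ℕ) (c : R) :
    (pderiv i)^[n] (monomial d c) =
      monomial (d - Finsupp.single i n) (c * (d i).descFactorial n) := by
  induction n with
  | zero => simp
  | succ n ih =>
    rw [Function.iterate_succ_apply', ih, pderiv_monomial]
    have h_sub : d - Finsupp.single i n - Finsupp.single i 1 = d - Finsupp.single i (n + 1) := by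
      ext x
      simp only [Finsupp.tsub_apply, Finsupp.single_apply]
      split <;> omega
    rw [h_sub, Finsupp.tsub_apply, Finsupp.single_eq_same, Nat.descFactorial_succ, Nat.cast_mul]
    ring_nf

end IteratedPDeriv

namespace coxMultAtLeast

variable {k : Type*} [Field k] {s : MvPolynomial (Fin 4) k} {m : ℕ} {p : Fin 4 → k}

theorem mono {m' : ℕ} (h : coxMultAtLeast s m p) (hm : m' ≤ m) : coxMultAtLeast s m' p :=
  fun l hl => h l (hl.trans_le hm)

theorem eval_eq_zero (h : coxMultAtLeast s (m + 1) p) : eval p s = 0 :=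
  h [] (Nat.succ_pos m)

theorem pderiv (h : coxMultAtLeast s (m + 1) p) (i : Fin 4) :
    coxMultAtLeast (MvPolynomial.pderiv i s) m p :=
  fun l hl => h (i :: l) (by simpa using hl)

theorem iterate_pderiv {n : ℕ} (h : coxMultAtLeast s (m + n) p) (i : Fin 4) :
    coxMultAtLeast ((MvPolynomial.pderiv i)^[n] s) m p := by
  induction n generalizing s with
  | zero => exact h
  | succ n ih => exact ih (h.pderiv i)

theorem eval_iterate_pderiv_eq_zero (h : coxMultAtLeast s m p)
    (x y : Fin 4) {i j : ℕ} (hij : i + j < m) :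
    eval p ((MvPolynomial.pderiv y)^[j] ((MvPolynomial.pderiv x)^[i] s)) = 0 :=
  ((((h.mono (show j + 1 + i ≤ m by omega)).iterate_pderiv x).mono
    (show 1 + j ≤ j + 1 by omega)).iterate_pderiv y).eval_eq_zero

end coxMultAtLeast

noncomputable def expX012 (a b e : ℕ) : Fin 4 →₀ ℕ :=
  Finsupp.single 0 a + Finsupp.single 1 b + Finsupp.single 2 e

@[simp] theorem expX012_apply_zero (a b e : ℕ) : expX012 a b e 0 = a := by simp [expX012]
@[simp] theorem expX012_apply_one (a b e : ℕ) : expX012 a b e 1 = b := by simp [expX012]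
@[simp] theorem expX012_apply_two (a b e : ℕ) : expX012 a b e 2 = e := by simp [expX012]
@[simp] theorem expX012_apply_three (a b e : ℕ) : expX012 a b e 3 = 0 := by simp [expX012]

theorem expX012_ext_iff {d : Fin 4 →₀ ℕ} {a b e : ℕ} :
    d = expX012 a b e ↔ d 0 = a ∧ d 1 = b ∧ d 2 = e ∧ d 3 = 0 := by
  constructor
  · rintro rfl; simp
  · rintro ⟨h0, h1, h2, h3⟩
    ext x
    fin_cases x <;> simpa

theorem expX012_sub_single_zero (a b e i : ℕ) :
    expX012 a b e - Finsupp.single 0 i = expX012 (a - i) b e := by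
  rw [expX012_ext_iff]; simp

theorem expX012_sub_single_one (a b e j : ℕ) :
    expX012 a b e - Finsupp.single 1 j = expX012 a (b - j) e := by
  rw [expX012_ext_iff]; simp

theorem expX012_sub_single_two (a b e : ℕ) :
    expX012 a b e - Finsupp.single 2 1 = expX012 a b (e - 1) := by
  rw [expX012_ext_iff]; simp

theorem monomial_expX012 {R : Type*} [CommSemiring R] (c : R) (a b e : ℕ) :
    monomial (expX012 a b e) c = C c * X 0 ^ a * X 1 ^ b * X 2 ^ e := by
  simp only [expX012, C_apply, X_pow_eq_monomial, monomial_mul, zero_add, mul_one]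

theorem eval_monomial_expX012 {R : Type*} [CommSemiring R] (p : Fin 4 → R) (c : R) (a b e : ℕ) :
    eval p (monomial (expX012 a b e) c) = c * p 0 ^ a * p 1 ^ b * p 2 ^ e := by
  simp [monomial_expX012]

section binomialForm

variable {R : Type*} [CommSemiring R]

/-- With the binomial coefficients built in, the coefficients of `c·(y x₀ - x x₁)ⁿ·x₂` are
`c yᵐ (-x)ⁿ⁻ᵐ`, and each derivative condition below is a two-term recurrence. -/
noncomputable def binomialForm (n e : ℕ) (b : ℕ → R) : MvPolynomial (Fin 4) R :=
  ∑ m ∈ range (n + 1), monomial (expX012 m (n - m) e) ((n.choose m : R) * b m)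

theorem pderiv_two_binomialForm_one (n : ℕ) (b : ℕ → R) :
    pderiv 2 (binomialForm n 1 b) = binomialForm n 0 b := by
  simp [binomialForm, pderiv_monomial, expX012_sub_single_two]

theorem pderiv_three_binomialForm (n e : ℕ) (b : ℕ → R) :
    pderiv 3 (binomialForm n e b) = 0 := by
  simp [binomialForm, pderiv_monomial]

theorem iterate_pderiv_binomialForm (n e i j : ℕ) (b : ℕ → R) :
    (pderiv 1)^[j] ((pderiv 0)^[i] (binomialForm n e b)) =
      ∑ m ∈ range (n + 1), monomial (expX012 (m - i) (n - m - j) e)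
        ((n.choose m : R) * b m * m.descFactorial i * (n - m).descFactorial j) := by
  simp only [binomialForm, iterate_pderiv_sum, iterate_pderiv_monomial, expX012_apply_zero,
    expX012_sub_single_zero, expX012_apply_one, expX012_sub_single_one]

theorem eval_iterate_pderiv_binomialForm_of_add_eq {n e i j : ℕ} (hij : i + j = n)
    (b : ℕ → R) (p : Fin 4 → R) :
    eval p ((pderiv 1)^[j] ((pderiv 0)^[i] (binomialForm n e b))) =
      n.factorial * b i * p 2 ^ e := by
  rw [iterate_pderiv_binomialForm, map_sum, Finset.sum_eq_single i]
  · have h := Nat.choose_mul_factorial_mul_factorial (show i ≤ n by omega)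
    rw [show n - i = j by omega] at h
    rw [eval_monomial_expX012, show n - i - j = 0 by omega, Nat.sub_self, Nat.descFactorial_self,
      show n - i = j by omega, Nat.descFactorial_self, ← h]
    push_cast
    ring
  · intro m hm hmi
    rw [mem_range] at hm
    rcases Nat.lt_or_gt_of_ne hmi with hmi | hmi
    · rw [Nat.descFactorial_eq_zero_iff_lt.mpr hmi]; simp
    · rw [Nat.descFactorial_eq_zero_iff_lt.mpr (show n - m < j by omega)]; simp
  · intro hi; simp at hi; omega

theorem eval_iterate_pderiv_binomialForm_of_add_eq_pred {n e i j : ℕ} (hij : i + j + 1 = n)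
    (b : ℕ → R) (p : Fin 4 → R) :
    eval p ((pderiv 1)^[j] ((pderiv 0)^[i] (binomialForm n e b))) =
      n.factorial * (p 1 * b i + p 0 * b (i + 1)) * p 2 ^ e := by
  have h_sub : {i, i + 1} ⊆ range (n + 1) := by
    intro x hx; simp at hx ⊢; omega
  rw [iterate_pderiv_binomialForm, map_sum, ← Finset.sum_subset h_sub,
    Finset.sum_pair (by omega)]
  · have h₁ := Nat.choose_mul_factorial_mul_factorial (show i ≤ n by omega)
    have h₂ := Nat.choose_mul_factorial_mul_factorial (show i + 1 ≤ n by omega)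
    rw [show n - i = j + 1 by omega] at h₁
    rw [show n - (i + 1) = j by omega] at h₂
    rw [eval_monomial_expX012, eval_monomial_expX012, show n - i = j + 1 by omega,
      show n - (i + 1) = j by omega, Nat.descFactorial_self, Nat.descFactorial_self,
      Nat.succ_descFactorial_self, Nat.succ_descFactorial_self, mul_add, add_mul]
    nth_rw 1 [← h₁]
    rw [← h₂]
    simp only [Nat.sub_self, Nat.add_sub_cancel_left, pow_zero, pow_one, Nat.cast_mul]
    ring
  · intro m hm hmi
    rw [mem_range] at hm
    simp only [mem_insert, mem_singleton, not_or] at hmi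
    rcases Nat.lt_or_gt_of_ne hmi.1 with hmi' | hmi'
    · rw [Nat.descFactorial_eq_zero_iff_lt.mpr hmi']; simp
    · rw [Nat.descFactorial_eq_zero_iff_lt.mpr (show n - m < j by omega)]; simp

theorem exists_ne_zero_of_binomialForm_ne_zero {n e : ℕ} {b : ℕ → R}
    (hb : binomialForm n e b ≠ 0) : ∃ i ≤ n, b i ≠ 0 := by
  by_contra! h
  refine hb (Finset.sum_eq_zero fun m hm => ?_)
  rw [h m (Nat.lt_succ_iff.mp (mem_range.mp hm)), mul_zero, monomial_zero]

end binomialForm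

theorem binomialForm_eq_C_mul_fiber_pow_mul_X_two {R : Type*} [CommRing R] (n : ℕ) (c x y : R) :
    binomialForm n 1 (fun m => c * y ^ m * (-x) ^ (n - m)) =
      C c * (C y * X 0 - C x * X 1) ^ n * X 2 := by
  rw [sub_eq_add_neg, ← neg_mul, ← C_neg, add_pow, Finset.mul_sum, Finset.sum_mul]
  refine Finset.sum_congr rfl fun m _ => ?_
  rw [monomial_expX012]
  simp only [mul_pow, ← C_pow, ← map_natCast C, C_mul]
  ring

theorem weight_hirzebruchCoxWeight (r : ℕ) (d : Fin 4 →₀ ℕ) :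
    Finsupp.weight (hirzebruchCoxWeight r) d = (d 0 + d 1 + d 3 * r, d 2 + d 3) := by
  rw [Finsupp.weight_apply, Finsupp.sum_fintype _ _ (by simp), Fin.sum_univ_four]
  simp [hirzebruchCoxWeight]

theorem eq_of_weight_hirzebruchCoxWeight_eq {r : ℕ} {d : Fin 4 →₀ ℕ}
    (hd : Finsupp.weight (hirzebruchCoxWeight r) d = (r + 1, 1)) :
    d = Finsupp.single 0 1 + Finsupp.single 3 1 ∨ d = Finsupp.single 1 1 + Finsupp.single 3 1 ∨
      ∃ m ≤ r + 1, d = expX012 m (r + 1 - m) 1 := by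
  rw [weight_hirzebruchCoxWeight, Prod.mk.injEq] at hd
  rcases (by omega : d 3 = 0 ∨ d 3 = 1) with h3 | h3
  · rw [h3, zero_mul] at hd
    exact Or.inr (Or.inr ⟨d 0, by omega, expX012_ext_iff.mpr ⟨rfl, by omega, by omega, h3⟩⟩)
  · rw [h3, one_mul] at hd
    have h2 : d 2 = 0 := by omega
    rcases (by omega : d 0 = 1 ∧ d 1 = 0 ∨ d 0 = 0 ∧ d 1 = 1) with ⟨h0, h1⟩ | ⟨h0, h1⟩
    · left
      ext x; fin_cases x <;> simp [h0, h1, h2, h3]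
    · right; left
      ext x; fin_cases x <;> simp [h0, h1, h2, h3]

theorem exists_eq_X_three_mul_add_binomialForm {k : Type*} [Field k] [CharZero k] {r : ℕ}
    {s : MvPolynomial (Fin 4) k}
    (hhom : s.IsWeightedHomogeneous (hirzebruchCoxWeight r) (r + 1, 1)) :
    ∃ α β : k, ∃ b : ℕ → k, s = X 3 * (C α * X 0 + C β * X 1) + binomialForm (r + 1) 1 b := by
  set F₀ : Fin 4 →₀ ℕ := Finsupp.single 0 1 + Finsupp.single 3 1
  set F₁ : Fin 4 →₀ ℕ := Finsupp.single 1 1 + Finsupp.single 3 1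
  set E : ℕ → Fin 4 →₀ ℕ := fun m => expX012 m (r + 1 - m) 1
  have h_supp : s.support ⊆ insert F₀ (insert F₁ ((range (r + 2)).image E)) := by
    intro d hd
    rcases eq_of_weight_hirzebruchCoxWeight_eq (hhom (mem_support_iff.mp hd))
      with h | h | ⟨m, hm, h⟩
    · rw [h]; exact mem_insert_self _ _
    · rw [h]; exact mem_insert_of_mem (mem_insert_self _ _)
    · simp only [mem_insert, mem_image, mem_range]
      exact Or.inr (Or.inr ⟨m, by omega, h.symm⟩)
  have hF₀ : F₀ ∉ insert F₁ ((range (r + 2)).image E) := by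
    simp only [mem_insert, mem_image, not_or, not_exists, not_and]
    refine ⟨fun h => by simpa [F₀, F₁] using congrArg (· 0) h, fun m _ h => ?_⟩
    simpa [F₀, E] using congrArg (· 3) h
  have hF₁ : F₁ ∉ (range (r + 2)).image E := by
    simp only [mem_image, not_exists, not_and]
    exact fun m _ h => by simpa [F₁, E] using congrArg (· 3) h
  have hE : Set.InjOn E (range (r + 2)) := fun m _ m' _ h => by
    simpa [E] using congrArg (· 0) h
  refine ⟨coeff F₀ s, coeff F₁ s, fun m => coeff (E m) s / (r + 1).choose m, ?_⟩
  calc s = ∑ d ∈ insert F₀ (insert F₁ ((range (r + 2)).image E)), monomial d (coeff d s) :=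
        s.as_sum.trans (sum_subset h_supp fun d _ hd => by
          rw [notMem_support_iff.mp hd, monomial_zero])
    _ = _ := by
      rw [sum_insert hF₀, sum_insert hF₁, sum_image hE, binomialForm, ← add_assoc]
      congr 1
      · simp only [F₀, F₁, monomial_add_single, ← C_mul_X_eq_monomial, pow_one]
        ring
      · refine sum_congr rfl fun m hm => ?_
        have : ((r + 1).choose m : k) ≠ 0 :=
          Nat.cast_ne_zero.mpr (Nat.choose_pos (by simpa [Nat.lt_succ_iff] using hm)).ne'
        rw [mul_div_cancel₀ _ this]

section Multiplicity

variable {k : Type*} [Field k] [CharZero k] {s : MvPolynomial (Fin 4) k} {p : Fin 4 → k}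
  {n : ℕ} {b : ℕ → k}

theorem exists_eq_binomialForm_of_coxMultAtLeast {r : ℕ} (hr : 1 ≤ r)
    (hhom : s.IsWeightedHomogeneous (hirzebruchCoxWeight r) (r + 1, 1))
    (hmult : coxMultAtLeast s (r + 2) p) :
    ∃ b : ℕ → k, s = binomialForm (r + 1) 1 b := by
  obtain ⟨α, β, b, rfl⟩ := exists_eq_X_three_mul_add_binomialForm hhom
  have h_lin : pderiv 3 (X 3 * (C α * X 0 + C β * X 1) + binomialForm (r + 1) 1 b) =
      C α * X 0 + C β * X 1 := by
    simp [pderiv_three_binomialForm]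
  have h₃ := (hmult.mono (show 3 ≤ r + 2 by omega)).pderiv 3
  rw [h_lin] at h₃
  have hα : α = 0 := by simpa using (h₃.pderiv 0).eval_eq_zero
  have hβ : β = 0 := by simpa using (h₃.pderiv 1).eval_eq_zero
  exact ⟨b, by simp [hα, hβ]⟩

theorem coxMultAtLeast.eval_two_eq_zero_of_binomialForm
    (h : coxMultAtLeast (binomialForm n 1 b) (n + 1) p) (hb : binomialForm n 1 b ≠ 0) :
    p 2 = 0 := by
  obtain ⟨i, hi, hbi⟩ := exists_ne_zero_of_binomialForm_ne_zero hb
  have h_eval := h.eval_iterate_pderiv_eq_zero 0 1 (i := i) (j := n - i) (by omega)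
  rw [eval_iterate_pderiv_binomialForm_of_add_eq (by omega)] at h_eval
  simpa [Nat.factorial_ne_zero, hbi] using h_eval

theorem not_coxMultAtLeast_binomialForm (hb : binomialForm n 1 b ≠ 0) :
    ¬ coxMultAtLeast (binomialForm n 1 b) (n + 2) p := by
  intro h
  obtain ⟨i, hi, hbi⟩ := exists_ne_zero_of_binomialForm_ne_zero hb
  have h_eval := (h.pderiv 2).eval_iterate_pderiv_eq_zero 0 1 (i := i) (j := n - i) (by omega)
  rw [pderiv_two_binomialForm_one,
    eval_iterate_pderiv_binomialForm_of_add_eq (by omega)] at h_eval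
  simp [Nat.factorial_ne_zero, hbi] at h_eval

theorem coxMultAtLeast.binomialForm_recurrence
    (h : coxMultAtLeast (binomialForm n 1 b) (n + 1) p) {i : ℕ} (hi : i < n) :
    p 1 * b i + p 0 * b (i + 1) = 0 := by
  have h_eval := (h.pderiv 2).eval_iterate_pderiv_eq_zero 0 1 (i := i) (j := n - i - 1)
    (by omega)
  rw [pderiv_two_binomialForm_one,
    eval_iterate_pderiv_binomialForm_of_add_eq_pred (by omega)] at h_eval
  simpa [Nat.factorial_ne_zero] using h_eval

end Multiplicity

theorem cross_mul_eq_of_C_mul_fiber_pow_mul_X_two_eq {K : Type*} [Field K] {n : ℕ} (hn : n ≠ 0)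
    {c c' : K} (hc' : c' ≠ 0) (p q : Fin 4 → K)
    (h : (C c * (C (p 1) * X 0 - C (p 0) * X 1) ^ n * X 2 : MvPolynomial (Fin 4) K) =
      C c' * (C (q 1) * X 0 - C (q 0) * X 1) ^ n * X 2) :
    q 1 * p 0 = q 0 * p 1 := by
  have h_eval := congrArg (eval (![p 0, p 1, 1, 0] : Fin 4 → K)) h
  simp only [map_mul, map_pow, map_sub, eval_C, eval_X] at h_eval
  simp only [Matrix.cons_val, sub_self, mul_comm (p 1), zero_pow hn, mul_zero, mul_one] at h_eval
  simpa [hn, hc', sub_eq_zero] using h_eval.symm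

theorem coxMultAtLeast.eq_C_mul_fiber_pow_mul_X_two {k : Type*} [Field k] [CharZero k] {r : ℕ}
    (hr : 1 ≤ r) {s : MvPolynomial (Fin 4) k} (hs : s ≠ 0)
    (hhom : s.IsWeightedHomogeneous (hirzebruchCoxWeight r) (r + 1, 1))
    {p : Fin 4 → k} (hp : IsCoxPoint p) (hmult : coxMultAtLeast s (r + 2) p) :
    (∃ c : k, c ≠ 0 ∧ s = C c * (C (p 1) * X 0 - C (p 0) * X 1) ^ (r + 1) * X 2) ∧
      p 2 = 0 ∧ ¬ coxMultAtLeast s (r + 3) p := by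
  obtain ⟨b, rfl⟩ := exists_eq_binomialForm_of_coxMultAtLeast hr hhom hmult
  obtain ⟨c, hc⟩ := exists_eq_mul_pow_mul_neg_pow_of_recurrence (n := r + 1) (b := b) hp.1
    fun _ hi => hmult.binomialForm_recurrence hi
  have h_eq :
      binomialForm (r + 1) 1 b = C c * (C (p 1) * X 0 - C (p 0) * X 1) ^ (r + 1) * X 2 := by
    rw [← binomialForm_eq_C_mul_fiber_pow_mul_X_two]
    exact sum_congr rfl fun m hm => by rw [hc m (Nat.lt_succ_iff.mp (mem_range.mp hm))]
  refine ⟨⟨c, fun hc₀ => hs ?_, h_eq⟩, hmult.eval_two_eq_zero_of_binomialForm hs,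
    not_coxMultAtLeast_binomialForm hs⟩
  rw [h_eq, hc₀, map_zero, zero_mul, zero_mul]

theorem stmt_11_general (k : Type*) [Field k] [CharZero k]
    (r : ℕ) (hr : 1 ≤ r)
    (s : MvPolynomial (Fin 4) k) (hs : s ≠ 0)
    (hhom : s.IsWeightedHomogeneous (hirzebruchCoxWeight r) (r + 1, 1))
    (p : Fin 4 → k) (hp : IsCoxPoint p)
    (hmult : coxMultAtLeast s (r + 2) p) :
    (∃ c : k, c ≠ 0 ∧
        s = C c * (C (p 1) * X 0 - C (p 0) * X 1) ^ (r + 1) * X 2) ∧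
      p 2 = 0 ∧
      ¬ coxMultAtLeast s (r + 3) p ∧
      ∀ q : Fin 4 → k, IsCoxPoint q → coxMultAtLeast s (r + 2) q →
        ∃ a b : k, a ≠ 0 ∧ b ≠ 0 ∧
          q 0 = a * p 0 ∧ q 1 = a * p 1 ∧ q 2 = b * p 2 ∧
          q 3 = a ^ r * b * p 3 := by
  obtain ⟨⟨c, hc, hs_p⟩, hp₂, hp_mult⟩ := hmult.eq_C_mul_fiber_pow_mul_X_two hr hs hhom hp
  refine ⟨⟨c, hc, hs_p⟩, hp₂, hp_mult, fun q hq hq_mult => ?_⟩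
  obtain ⟨⟨c', hc', hs_q⟩, hq₂, -⟩ := hq_mult.eq_C_mul_fiber_pow_mul_X_two hr hs hhom hq
  obtain ⟨a, ha, hq₀, hq₁⟩ := exists_eq_mul_of_mul_eq_mul hp.1 hq.1
    (cross_mul_eq_of_C_mul_fiber_pow_mul_X_two_eq r.succ_ne_zero hc' p q (hs_p.symm.trans hs_q))
  have hp₃ : p 3 ≠ 0 := hp.2.resolve_left (not_not.mpr hp₂)
  have hq₃ : q 3 ≠ 0 := hq.2.resolve_left (not_not.mpr hq₂)
  refine ⟨a, q 3 / (a ^ r * p 3), ha, div_ne_zero hq₃ (mul_ne_zero (pow_ne_zero r ha) hp₃),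
    hq₀, hq₁, by simp [hp₂, hq₂], by field_simp⟩

/-- Example 4.2 / Proposition 4.6: let `r ≥ 1` and let `D = {s = 0}` be an effective
divisor on `F_r` in the linear system `|L_r| = |(r+1)F + E|`, i.e. `s ≠ 0` is
Cox-homogeneous of class `(r+1)·F + E`. If `P` (with Cox coordinates `p`) satisfies
`mult_P(D) ≥ r+2`, then `D = (r+1)·F_P + E` where `F_P` is the fiber through `P`
(cut out by `p₁·x₀ - p₀·x₁`) and `E` is the negative section (cut out by `x₂`);
moreover `P` lies on `E`, `mult_P(D) ≤ r+2`, and any point of multiplicity `≥ r+2`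
on `D` coincides with `P` (equal Cox coordinates up to the torus action). -/
theorem stmt_11 (k : Type*) [Field k] [IsAlgClosed k] [CharZero k]
    (r : ℕ) (hr : 1 ≤ r)
    (s : MvPolynomial (Fin 4) k) (hs : s ≠ 0)
    (hhom : s.IsWeightedHomogeneous (hirzebruchCoxWeight r) (r + 1, 1))
    (p : Fin 4 → k) (hp : IsCoxPoint p)
    (hmult : coxMultAtLeast s (r + 2) p) :
    (∃ c : k, c ≠ 0 ∧
        s = C c * (C (p 1) * X 0 - C (p 0) * X 1) ^ (r + 1) * X 2) ∧
      p 2 = 0 ∧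
      ¬ coxMultAtLeast s (r + 3) p ∧
      ∀ q : Fin 4 → k, IsCoxPoint q → coxMultAtLeast s (r + 2) q →
        ∃ a b : k, a ≠ 0 ∧ b ≠ 0 ∧
          q 0 = a * p 0 ∧ q 1 = a * p 1 ∧ q 2 = b * p 2 ∧
          q 3 = a ^ r * b * p 3 :=
  stmt_11_general k r hr s hs hhom p hp hmult
end

section
/- Let r ≥ 2 and let D be an effective divisor on the Hirzebruch surface F_r linearly equivalent to L_r = (r+1)F + E. If P and P' are two points with mult_P(D) ≥ r+1 and mult_{P'}(D) ≥ r+1, then P and P' lie in the same fiber of the ruling F_r → P¹. -/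
open MvPolynomial

/-!
Homogeneity of class `(r + 1)F + E` forces `s = x₂ f(x₀, x₁) + x₃ g(x₀, x₁)` with binary forms `f`,
`g` of degrees `r + 1` and `1`. As `r + 1 ≥ 3`, the second derivatives `∂₀∂₃ s`, `∂₁∂₃ s`, which are
the coefficients of `g`, vanish at `P`; so `g = 0` and `f ≠ 0`. For `|α| < r` we have
`∂^α ∂₂ s = ∂^α f`, so `f` vanishes to order `≥ r` at the image in `ℙ¹` of each of `P` and `P'`.
Two distinct such points would give `2r ≤ deg f = r + 1`, impossible for `r ≥ 2`.
-/

open scoped Polynomial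
open Finsupp (single)

theorem List.foldl_replicate {α β : Type*} (f : α → β → α) (a : α) (b : β) (n : ℕ) :
    (List.replicate n b).foldl f a = (fun x => f x b)^[n] a := by
  induction n generalizing a with
  | zero => rfl
  | succ n ih => rw [List.replicate_succ, List.foldl_cons, ih, Function.iterate_succ_apply]

namespace MvPolynomial

variable {σ R : Type*} [CommSemiring R]

theorem coeff_iterate_pderiv [DecidableEq σ] (i : σ) (j : ℕ) (φ : MvPolynomial σ R)
    (d : σ →₀ ℕ) :
    coeff d ((pderiv i)^[j] φ) = coeff (d + single i j) φ * (d i + j).descFactorial j := by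
  induction j generalizing φ with
  | zero => simp
  | succ j ih =>
    rw [Function.iterate_succ_apply, ih, coeff_pderiv, add_assoc, ← Finsupp.single_add,
      Finsupp.add_apply, Finsupp.single_eq_same, ← add_assoc, Nat.succ_descFactorial_succ]
    push_cast
    ring

theorem IsHomogeneous.iterate_pderiv {φ : MvPolynomial σ R} {n : ℕ} (h : φ.IsHomogeneous n)
    (i : σ) (j : ℕ) : ((pderiv i)^[j] φ).IsHomogeneous (n - j) := by
  induction j with
  | zero => simpa
  | succ j ih => rw [Function.iterate_succ_apply', Nat.sub_succ]; exact ih.pderiv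

theorem IsHomogeneous.eval_of_apply_one_eq_zero {φ : MvPolynomial (Fin 2) R} {n : ℕ}
    (h : φ.IsHomogeneous n) {x : Fin 2 → R} (hx : x 1 = 0) :
    eval x φ = coeff (single 0 n) φ * x 0 ^ n := by
  rw [eval_eq', Finset.sum_eq_single (single 0 n)]
  · simp [Fin.prod_univ_two]
  · intro d hd hne
    have hdeg := h (mem_support_iff.mp hd)
    simp [Finsupp.weight_apply, Finsupp.sum_fintype] at hdeg
    have h1 : d 1 ≠ 0 := by
      intro h1; apply hne; ext i; fin_cases i <;> simp_all
    simp [Fin.prod_univ_two, hx, h1]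
  · intro h; simp [notMem_support_iff.mp h]

end MvPolynomial

namespace Polynomial

section CommSemiring

variable {R : Type*} [CommSemiring R]

theorem pderiv_zero_homogenize (p : R[X]) (n : ℕ) :
    pderiv 0 (p.homogenize (n + 1)) = (derivative p).homogenize n := by
  ext d
  simp only [coeff_pderiv, coeff_homogenize, coeff_derivative, Finsupp.add_apply]
  split_ifs <;> simp_all <;> omega

theorem iterate_pderiv_zero_homogenize (p : R[X]) (n i : ℕ) :
    (pderiv 0)^[i] (p.homogenize (n + i)) = (derivative^[i] p).homogenize n := by
  induction i generalizing p with
  | zero => rfl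
  | succ i ih =>
    rw [Function.iterate_succ_apply, ← add_assoc, pderiv_zero_homogenize, ih,
      Function.iterate_succ_apply]

theorem eval_iterate_pderiv_one_homogenize (p : R[X]) (n j : ℕ) {x : Fin 2 → R}
    (hx : x 1 = 0) :
    MvPolynomial.eval x ((pderiv 1)^[j] (p.homogenize (n + j))) =
      p.coeff n * (j.factorial : R) * x 0 ^ n := by
  have hhom := (isHomogeneous_homogenize (n := n + j) p).iterate_pderiv 1 j
  rw [Nat.add_sub_cancel] at hhom
  rw [hhom.eval_of_apply_one_eq_zero hx, coeff_iterate_pderiv, coeff_homogenize]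
  simp [Nat.descFactorial_self]

end CommSemiring

theorem add_le_natDegree_of_pow_X_sub_C_dvd {K : Type*} [Field K] {f : K[X]} (hf : f ≠ 0)
    {a b : K} (hab : a ≠ b) {m n : ℕ} (ha : (X - C a) ^ m ∣ f) (hb : (X - C b) ^ n ∣ f) :
    m + n ≤ f.natDegree := by
  have hcop : IsCoprime ((X - C a) ^ m) ((X - C b) ^ n) :=
    (isCoprime_X_sub_C_of_isUnit_sub (sub_ne_zero.2 hab).isUnit).pow
  simpa [natDegree_mul, X_sub_C_ne_zero] using natDegree_le_of_dvd (hcop.mul_dvd ha hb) hf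

end Polynomial

abbrev fiberCoord : Fin 2 → Fin 4 := Fin.castLE (by norm_num)

@[simp] theorem fiberCoord_one : fiberCoord 1 = 1 := rfl

theorem coeff_rename_fiberCoord_homogenize {R : Type*} [CommSemiring R] (F : R[X]) (n : ℕ)
    (d : Fin 4 →₀ ℕ) :
    coeff d (rename fiberCoord (F.homogenize n)) =
      if d 2 = 0 ∧ d 3 = 0 ∧ d 0 + d 1 = n then F.coeff (d 0) else 0 := by
  by_cases hd : d 2 = 0 ∧ d 3 = 0
  · have hd' : d = Finsupp.mapDomain fiberCoord (single 0 (d 0) + single 1 (d 1)) := by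
      ext j; fin_cases j <;> simp [Finsupp.mapDomain_add, Finsupp.mapDomain_single, hd]
    conv_lhs => rw [hd']
    rw [coeff_rename_mapDomain _ (Fin.castLE_injective _), Polynomial.coeff_homogenize]
    simp [hd]
  · rw [if_neg (by tauto), coeff_rename_eq_zero]
    rintro u rfl
    refine absurd ⟨?_, ?_⟩ hd <;> refine Finsupp.mapDomain_of_notMem_range _ _ ?_ <;>
      rintro ⟨a, ha⟩ <;> fin_cases a <;> simp at ha

theorem coxMultAtLeast.mono_s12 {k : Type*} [Field k] {s : MvPolynomial (Fin 4) k} {m n : ℕ}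
    {p : Fin 4 → k} (h : coxMultAtLeast s n p) (hmn : m ≤ n) : coxMultAtLeast s m p :=
  fun l hl => h l (hl.trans_le hmn)

section CoxRing

variable {k : Type*} [Field k] {r : ℕ} {s : MvPolynomial (Fin 4) k}

theorem exponent_cases_of_coeff_ne_zero
    (hhom : s.IsWeightedHomogeneous (hirzebruchCoxWeight r) (r + 1, 1)) {d : Fin 4 →₀ ℕ}
    (hd : coeff d s ≠ 0) :
    d 2 = 1 ∧ d 3 = 0 ∧ d 0 + d 1 = r + 1 ∨ d 2 = 0 ∧ d 3 = 1 ∧ d 0 + d 1 = 1 := by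
  have hw : d 0 + d 1 + d 3 * r = r + 1 ∧ d 2 + d 3 = 1 := by
    simpa [Finsupp.weight_apply, Finsupp.sum_fintype, Fin.sum_univ_four, hirzebruchCoxWeight,
      Prod.ext_iff] using hhom hd
  rcases (by omega : d 3 = 0 ∨ d 3 = 1) with h3 | h3 <;> simp [h3] at hw <;> omega

theorem pderiv_pderiv_three
    (hhom : s.IsWeightedHomogeneous (hirzebruchCoxWeight r) (r + 1, 1)) {i : Fin 4}
    (hi : i = 0 ∨ i = 1) : pderiv i (pderiv 3 s) = C (coeff (single i 1 + single 3 1) s) := by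
  ext d
  rw [coeff_pderiv, coeff_pderiv, coeff_C]
  split_ifs with hd
  · subst hd
    rcases hi with rfl | rfl <;> simp
  · suffices coeff (d + single i 1 + single 3 1) s = 0 by simp [this]
    by_contra h
    have hexp := exponent_cases_of_coeff_ne_zero hhom h
    apply hd
    ext j
    rcases hi with rfl | rfl <;> simp at hexp <;> fin_cases j <;> simp <;> omega

theorem coeff_single_add_single_three_eq_zero
    (hhom : s.IsWeightedHomogeneous (hirzebruchCoxWeight r) (r + 1, 1)) {p : Fin 4 → k}
    (hmp : coxMultAtLeast s 3 p) {i : Fin 4} (hi : i = 0 ∨ i = 1) :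
    coeff (single i 1 + single 3 1) s = 0 := by
  simpa [pderiv_pderiv_three hhom hi] using hmp [3, i] (by simp)

/-- Writing `s = x₂ f(x₀, x₁) + x₃ g(x₀, x₁)`, this is the dehomogenization `f(X, 1)`. -/
noncomputable def fiberPoly (r : ℕ) (s : MvPolynomial (Fin 4) k) : k[X] :=
  ∑ m ∈ Finset.range (r + 2),
    Polynomial.monomial m (coeff (single 0 m + single 1 (r + 1 - m) + single 2 1) s)

theorem coeff_fiberPoly {m : ℕ} (hm : m ≤ r + 1) :
    (fiberPoly r s).coeff m = coeff (single 0 m + single 1 (r + 1 - m) + single 2 1) s := by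
  rw [fiberPoly, Polynomial.finsetSum_coeff, Finset.sum_eq_single m]
  · simp
  · intro b _ hb; simp [Polynomial.coeff_monomial, hb]
  · simp; omega

theorem natDegree_fiberPoly_le : (fiberPoly r s).natDegree ≤ r + 1 :=
  Polynomial.natDegree_sum_le_of_forall_le _ _ fun m hm =>
    (Polynomial.natDegree_monomial_le _).trans (by simp at hm; omega)

theorem pderiv_two_eq_rename_homogenize
    (hhom : s.IsWeightedHomogeneous (hirzebruchCoxWeight r) (r + 1, 1)) :
    pderiv 2 s = rename fiberCoord ((fiberPoly r s).homogenize (r + 1)) := by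
  ext d
  rw [coeff_pderiv, coeff_rename_fiberCoord_homogenize]
  split_ifs with hd
  · rw [coeff_fiberPoly (by omega), hd.1, Nat.cast_zero, zero_add, mul_one]
    congr 1
    ext j; fin_cases j <;> simp [hd.1, hd.2.1]; omega
  · by_contra h
    have := exponent_cases_of_coeff_ne_zero hhom (left_ne_zero_of_mul h)
    simp at this
    omega

theorem fiberPoly_ne_zero
    (hhom : s.IsWeightedHomogeneous (hirzebruchCoxWeight r) (r + 1, 1)) (hs : s ≠ 0)
    {p : Fin 4 → k} (hmp : coxMultAtLeast s 3 p) : fiberPoly r s ≠ 0 := by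
  intro hF
  obtain ⟨d, hd⟩ := exists_coeff_ne_zero hs
  apply hd
  rcases exponent_cases_of_coeff_ne_zero hhom hd with ⟨h2, h3, h01⟩ | ⟨h2, h3, h01⟩
  · have hc := coeff_fiberPoly (r := r) (s := s) (m := d 0) (by omega)
    rw [hF, Polynomial.coeff_zero] at hc
    convert hc.symm using 2
    ext j; fin_cases j <;> simp <;> omega
  · rcases (by omega : d 0 = 1 ∨ d 1 = 1) with h | h
    · convert coeff_single_add_single_three_eq_zero hhom hmp (i := 0) (by simp) using 2
      ext j; fin_cases j <;> simp <;> omega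
    · convert coeff_single_add_single_three_eq_zero hhom hmp (i := 1) (by simp) using 2
      ext j; fin_cases j <;> simp <;> omega

theorem eval_iterate_pderiv_homogenize_fiberPoly
    (hhom : s.IsWeightedHomogeneous (hirzebruchCoxWeight r) (r + 1, 1)) {p : Fin 4 → k}
    (hmp : coxMultAtLeast s (r + 1) p) (v : Fin 2) {i : ℕ} (hi : i < r) :
    eval (p ∘ fiberCoord) ((pderiv v)^[i] ((fiberPoly r s).homogenize (r + 1))) = 0 := by
  have h := hmp (2 :: List.replicate i (fiberCoord v)) (by simp; omega)
  have hsemi : Function.Semiconj (rename fiberCoord : MvPolynomial (Fin 2) k → _) (pderiv v)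
      (pderiv (fiberCoord v)) :=
    fun φ => (pderiv_rename (Fin.castLE_injective _) v φ).symm
  rwa [List.foldl_cons, List.foldl_replicate, pderiv_two_eq_rename_homogenize hhom,
    ← hsemi.iterate_right, eval_rename] at h

theorem pow_dvd_fiberPoly [CharZero k]
    (hhom : s.IsWeightedHomogeneous (hirzebruchCoxWeight r) (r + 1, 1)) {p : Fin 4 → k}
    (hmp : coxMultAtLeast s (r + 1) p) (hp1 : p 1 ≠ 0) :
    (Polynomial.X - Polynomial.C (p 0 / p 1)) ^ r ∣ fiberPoly r s := by
  by_cases hF : fiberPoly r s = 0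
  · simp [hF]
  rw [← Polynomial.le_rootMultiplicity_iff hF]
  rcases Nat.eq_zero_or_pos r with rfl | hr
  · exact Nat.zero_le _
  suffices r - 1 < (fiberPoly r s).rootMultiplicity (p 0 / p 1) by omega
  refine Polynomial.lt_rootMultiplicity_of_isRoot_iterate_derivative hF fun m hm => ?_
  obtain ⟨j, hj⟩ : ∃ j, r + 1 = j + m := ⟨r + 1 - m, by omega⟩
  have h := eval_iterate_pderiv_homogenize_fiberPoly hhom hmp 0 (i := m) (by omega)
  have hdeg : (Polynomial.derivative^[m] (fiberPoly r s)).natDegree ≤ j :=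
    (Polynomial.natDegree_iterate_derivative _ _).trans
      (by have := natDegree_fiberPoly_le (r := r) (s := s); omega)
  rw [hj, Polynomial.iterate_pderiv_zero_homogenize,
    Polynomial.eval_homogenize hdeg _ (by simpa using hp1)] at h
  simpa [hp1] using h

theorem natDegree_fiberPoly_le_one [CharZero k]
    (hhom : s.IsWeightedHomogeneous (hirzebruchCoxWeight r) (r + 1, 1)) {p : Fin 4 → k}
    (hmp : coxMultAtLeast s (r + 1) p) (hp0 : p 0 ≠ 0) (hp1 : p 1 = 0) :
    (fiberPoly r s).natDegree ≤ 1 := by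
  rw [Polynomial.natDegree_le_iff_coeff_eq_zero]
  intro m hm
  by_cases hmr : m ≤ r + 1
  · obtain ⟨j, hj⟩ : ∃ j, r + 1 = m + j := ⟨r + 1 - m, by omega⟩
    have h := eval_iterate_pderiv_homogenize_fiberPoly hhom hmp 1 (i := j) (by omega)
    rw [hj, Polynomial.eval_iterate_pderiv_one_homogenize _ _ _ (by simpa using hp1)] at h
    simpa [hp0, Nat.factorial_ne_zero] using h
  · have := natDegree_fiberPoly_le (r := r) (s := s)
    exact Polynomial.coeff_eq_zero_of_natDegree_lt (by omega)

end CoxRing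

theorem stmt_12_general (k : Type*) [Field k] [CharZero k]
    (r : ℕ) (hr : 2 ≤ r)
    (s : MvPolynomial (Fin 4) k) (hs : s ≠ 0)
    (hhom : s.IsWeightedHomogeneous (hirzebruchCoxWeight r) (r + 1, 1))
    (p q : Fin 4 → k) (hp : IsCoxPoint p) (hq : IsCoxPoint q)
    (hmp : coxMultAtLeast s (r + 1) p) (hmq : coxMultAtLeast s (r + 1) q) :
    p 0 * q 1 = p 1 * q 0 := by
  have hF := fiberPoly_ne_zero hhom hs (hmp.mono_s12 (by omega))
  have hdeg : (fiberPoly r s).natDegree ≤ r + 1 := natDegree_fiberPoly_le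
  have r_le_natDegree {x : Fin 4 → k} (hx : coxMultAtLeast s (r + 1) x) (hx1 : x 1 ≠ 0) :
      r ≤ (fiberPoly r s).natDegree := by
    simpa using Polynomial.natDegree_le_of_dvd (pow_dvd_fiberPoly hhom hx hx1) hF
  have natDegree_le_one {x : Fin 4 → k} (hx : IsCoxPoint x) (hmx : coxMultAtLeast s (r + 1) x)
      (hx1 : x 1 = 0) : (fiberPoly r s).natDegree ≤ 1 :=
    natDegree_fiberPoly_le_one hhom hmx (hx.1.resolve_right (not_not.2 hx1)) hx1
  rcases eq_or_ne (p 1) 0 with hp1 | hp1 <;> rcases eq_or_ne (q 1) 0 with hq1 | hq1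
  · simp [hp1, hq1]
  · have := natDegree_le_one hp hmp hp1; have := r_le_natDegree hmq hq1; omega
  · have := natDegree_le_one hq hmq hq1; have := r_le_natDegree hmp hp1; omega
  · by_contra hne
    have hab : p 0 / p 1 ≠ q 0 / q 1 := by rwa [ne_eq, div_eq_div_iff hp1 hq1, mul_comm (q 0)]
    have := Polynomial.add_le_natDegree_of_pow_X_sub_C_dvd hF hab
      (pow_dvd_fiberPoly hhom hmp hp1) (pow_dvd_fiberPoly hhom hmq hq1)
    omega

/-- Theorem 4.7(a): let `r ≥ 2` and let `D = {s = 0}` be an effective divisor on the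
Hirzebruch surface `F_r` in the linear system `|L_r| = |(r+1)F + E|`, i.e. `s ≠ 0` is
Cox-homogeneous of class `(r+1)·F + E`. If two points `P, P'` (with Cox coordinates
`p, q`) both have multiplicity `≥ r+1` on `D`, then they lie in the same fiber of the
ruling `F_r → ℙ¹`, i.e. their `ℙ¹`-coordinates `(p 0 : p 1)` and `(q 0 : q 1)`
agree. -/
theorem stmt_12 (k : Type*) [Field k] [IsAlgClosed k] [CharZero k]
    (r : ℕ) (hr : 2 ≤ r)
    (s : MvPolynomial (Fin 4) k) (hs : s ≠ 0)
    (hhom : s.IsWeightedHomogeneous (hirzebruchCoxWeight r) (r + 1, 1))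
    (p q : Fin 4 → k) (hp : IsCoxPoint p) (hq : IsCoxPoint q)
    (hmp : coxMultAtLeast s (r + 1) p) (hmq : coxMultAtLeast s (r + 1) q) :
    p 0 * q 1 = p 1 * q 0 :=
  stmt_12_general k r hr s hs hhom p q hp hq hmp hmq
end
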